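/- arXiv:2303.02992 — 3 statements merged into one kernel-verified Lean document; each statement's English description precedes it below -/
import Mathlib

section
/- Let $a,b>0$ and $\tau\ge0$, and let $G=G(\zeta)$ be the solution of the implicit equation $G=\frac{a(\zeta+\tau G)^2}{b-\zeta-\tau G}$ with $G=O(\zeta^2)$. Then $G(\zeta)=\frac{2a\zeta^2}{\,b-\zeta-2a\tau\zeta+\sqrt{(b-\zeta-2a\tau\zeta)^2-4a\tau\zeta^2(1+a\tau)}\,}$, and $G$ is analytic in the disk $|\zeta|<\frac{b}{1+2a\tau+2\sqrt{a\tau(1+a\tau)}}$. -/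
open Metric

lemma aux_mul_slit {u v : ℂ} (hu : 0 < u.re) (hv : 0 < v.re) :
    u * v ∈ Complex.slitPlane := by
  rw [Complex.mem_slitPlane_iff]
  by_contra h
  push_neg at h
  obtain ⟨h1, h2⟩ := h
  have hv0 : v ≠ 0 := fun h => by simp [h] at hv
  have hu' : u = (u * v) / v := by field_simp
  rw [hu', Complex.div_re, h2] at hu
  have hnsq : 0 < Complex.normSq v := Complex.normSq_pos.mpr hv0
  have : (u * v).re * v.re / Complex.normSq v ≤ 0 := by
    apply div_nonpos_of_nonpos_of_nonneg
    · exact mul_nonpos_of_nonpos_of_nonneg h1 hv.le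
    · exact hnsq.le
  rw [zero_mul, zero_div, add_zero] at hu
  linarith

lemma aux_re_sqrt {z : ℂ} (hz : z ∈ Complex.slitPlane) :
    0 < (z ^ ((1 : ℂ) / 2)).re := by
  have hz0 : z ≠ 0 := Complex.slitPlane_ne_zero hz
  rw [Complex.cpow_def_of_ne_zero hz0, Complex.exp_re]
  have him : (Complex.log z * ((1 : ℂ) / 2)).im = z.arg / 2 := by
    simp [Complex.mul_im, Complex.log_im, Complex.log_re]
    ring
  rw [him]
  have h1 : z.arg < Real.pi := lt_of_le_of_ne (Complex.arg_le_pi z) (Complex.slitPlane_arg_ne_pi hz)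
  have h2 : -Real.pi < z.arg := Complex.neg_pi_lt_arg z
  have hcos : 0 < Real.cos (z.arg / 2) := by
    apply Real.cos_pos_of_mem_Ioo
    constructor <;> [linarith; linarith]
  positivity

/-- The explicit branch `G(ζ) = 2aζ² / (b - ζ - 2aτζ + √((b-ζ-2aτζ)² - 4aτζ²(1+aτ)))`. -/
noncomputable def Gexp (a b τ : ℝ) (ζ : ℂ) : ℂ :=
  2 * (a : ℂ) * ζ ^ 2 /
    ((b : ℂ) - ζ - 2 * a * τ * ζ +
      (((b : ℂ) - ζ - 2 * a * τ * ζ) ^ 2 - 4 * a * τ * ζ ^ 2 * (1 + a * τ)) ^ ((1 : ℂ) / 2))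

/-- Lemma 4 (explicit computation): the function `Gexp` satisfies the implicit equation
`G = a(ζ+τG)²/(b-ζ-τG)`, is analytic in the disk
`|ζ| < b / (1 + 2aτ + 2√(aτ(1+aτ)))`, and any analytic solution with `G = O(ζ²)` of the
implicit equation coincides with `Gexp` near `0`. -/
theorem explicit_burgers_solution (a b τ : ℝ) (ha : 0 < a) (hb : 0 < b) (hτ : 0 ≤ τ) :
    (∀ ζ ∈ ball (0 : ℂ) (b / (1 + 2 * a * τ + 2 * Real.sqrt (a * τ * (1 + a * τ)))),
      Gexp a b τ ζ =
        (a : ℂ) * (ζ + τ * Gexp a b τ ζ) ^ 2 / ((b : ℂ) - ζ - τ * Gexp a b τ ζ)) ∧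
    AnalyticOn ℂ (Gexp a b τ)
      (ball (0 : ℂ) (b / (1 + 2 * a * τ + 2 * Real.sqrt (a * τ * (1 + a * τ))))) ∧
    (∀ G : ℂ → ℂ, AnalyticAt ℂ G 0 → G 0 = 0 → deriv G 0 = 0 →
      (∀ᶠ ζ in nhds (0 : ℂ),
        G ζ = (a : ℂ) * (ζ + τ * G ζ) ^ 2 / ((b : ℂ) - ζ - τ * G ζ)) →
      ∀ᶠ ζ in nhds (0 : ℂ), G ζ = Gexp a b τ ζ) := by
  have hsnn : (0:ℝ) ≤ a * τ * (1 + a * τ) := by positivity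
  set s : ℝ := Real.sqrt (a * τ * (1 + a * τ)) with hsdef
  have hs0 : 0 ≤ s := Real.sqrt_nonneg _
  have hs2 : s ^ 2 = a * τ * (1 + a * τ) := Real.sq_sqrt hsnn
  have haτ : 0 ≤ a * τ := by positivity
  have hdpos : (0:ℝ) < 1 + 2 * a * τ + 2 * s := by linarith
  set t : ℝ := b / (1 + 2 * a * τ + 2 * s) with htdef
  have ht : 0 < t := div_pos hb hdpos
  have htb : t * (1 + 2 * a * τ + 2 * s) = b := div_mul_cancel₀ _ hdpos.ne'
  have htleb : t ≤ b := by nlinarith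
  have key : ∀ ζ ∈ ball (0 : ℂ) t,
      ((τ:ℂ) * (1 + (a:ℂ) * (τ:ℂ)) * (Gexp a b τ ζ) ^ 2
        + (2 * (a:ℂ) * (τ:ℂ) * ζ + ζ - (b:ℂ)) * Gexp a b τ ζ + (a:ℂ) * ζ ^ 2 = 0)
      ∧ ((b:ℂ) - ζ - (τ:ℂ) * Gexp a b τ ζ ≠ 0)
      ∧ AnalyticAt ℂ (Gexp a b τ) ζ := by
    intro ζ hζ
    rw [mem_ball_zero_iff] at hζ
    set D : ℂ := (b : ℂ) - ζ - 2 * a * τ * ζ with hD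
    set Δ : ℂ := D ^ 2 - 4 * a * τ * ζ ^ 2 * (1 + a * τ) with hΔ
    set S : ℂ := Δ ^ ((1 : ℂ) / 2) with hS
    have hre : ∀ c : ℝ, |c| ≤ 1 + 2 * a * τ + 2 * s → 0 < ((b:ℂ) - (c:ℂ) * ζ).re := by
      intro c hc
      have h1 : ((b:ℂ) - (c:ℂ) * ζ).re = b - c * ζ.re := by simp
      rw [h1]
      have hre1 : |ζ.re| ≤ ‖ζ‖ := Complex.abs_re_le_norm ζ
      have h2 : |c * ζ.re| ≤ (1 + 2 * a * τ + 2 * s) * ‖ζ‖ := by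
        rw [abs_mul]
        exact mul_le_mul hc hre1 (abs_nonneg _) hdpos.le
      have h3 : (1 + 2 * a * τ + 2 * s) * ‖ζ‖ < (1 + 2 * a * τ + 2 * s) * t := by
        exact mul_lt_mul_of_pos_left hζ hdpos
      have h4 : c * ζ.re ≤ |c * ζ.re| := le_abs_self _
      nlinarith
    have hcast : ((s:ℝ):ℂ) ^ 2 = (a:ℂ) * (τ:ℂ) * (1 + (a:ℂ) * (τ:ℂ)) := by
      exact_mod_cast congrArg (fun x : ℝ => (x : ℂ)) hs2
    have hfac : Δ = ((b:ℂ) - (((1 + 2 * a * τ + 2 * s : ℝ)):ℂ) * ζ)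
        * ((b:ℂ) - (((1 + 2 * a * τ - 2 * s : ℝ)):ℂ) * ζ) := by
      rw [hΔ, hD]
      push_cast
      linear_combination 4 * ζ ^ 2 * hcast
    have hslit : Δ ∈ Complex.slitPlane := by
      rw [hfac]
      refine aux_mul_slit (hre _ ?_) (hre _ ?_)
      · rw [abs_of_nonneg (by linarith)]
      · rw [abs_le]; constructor <;> linarith
    have hΔ0 : Δ ≠ 0 := Complex.slitPlane_ne_zero hslit
    have hSre : 0 < S.re := aux_re_sqrt hslit
    have hS2 : S * S = Δ := by
      rw [hS, ← Complex.cpow_add _ _ hΔ0]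
      norm_num
    have hS2' : S * S = D ^ 2 - 4 * a * τ * ζ ^ 2 * (1 + a * τ) := by rw [hS2, hΔ]
    have hDre : 0 < D.re := by
      have hD' : D = (b:ℂ) - (((1 + 2 * a * τ : ℝ)):ℂ) * ζ := by
        rw [hD]; push_cast; ring
      rw [hD']
      exact hre _ (by rw [abs_of_nonneg (by linarith)]; linarith)
    have hDS : D + S ≠ 0 := by
      intro h
      have : (D + S).re = 0 := by rw [h]; simp
      rw [Complex.add_re] at this
      linarith
    have hEdef : Gexp a b τ ζ = 2 * (a:ℂ) * ζ ^ 2 / (D + S) := rfl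
    have hquad : (τ:ℂ) * (1 + (a:ℂ) * (τ:ℂ)) * (Gexp a b τ ζ) ^ 2
        + (2 * (a:ℂ) * (τ:ℂ) * ζ + ζ - (b:ℂ)) * Gexp a b τ ζ + (a:ℂ) * ζ ^ 2 = 0 := by
      rw [hEdef]
      field_simp
      linear_combination ((a:ℂ) * ζ ^ 2) * hS2' + ((a:ℂ) * ζ ^ 2 * 2 * (D + S)) * hD
    have hkey2 : 2 * (1 + (a:ℂ) * (τ:ℂ)) * ((b:ℂ) - ζ - (τ:ℂ) * Gexp a b τ ζ)
        = (b:ℂ) * (1 + 2 * (a:ℂ) * (τ:ℂ)) - ζ + S := by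
      rw [hEdef]
      field_simp
      linear_combination -hS2'
    have hden : (b:ℂ) - ζ - (τ:ℂ) * Gexp a b τ ζ ≠ 0 := by
      intro h
      rw [h, mul_zero] at hkey2
      have hre2 : ((b:ℂ) * (1 + 2 * (a:ℂ) * (τ:ℂ)) - ζ + S).re = 0 := by
        rw [← hkey2]; simp
      have hbre : ((b:ℂ) * (1 + 2 * (a:ℂ) * (τ:ℂ))).re = b * (1 + 2 * a * τ) := by
        have : ((b:ℂ) * (1 + 2 * (a:ℂ) * (τ:ℂ))) = ((b * (1 + 2 * a * τ) : ℝ) : ℂ) := by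
          push_cast; ring
        rw [this, Complex.ofReal_re]
      rw [Complex.add_re, Complex.sub_re, hbre] at hre2
      have hζre : ζ.re ≤ ‖ζ‖ := Complex.re_le_norm ζ
      nlinarith
    have hA : AnalyticAt ℂ (Gexp a b τ) ζ := by
      have h1 : AnalyticAt ℂ (fun z : ℂ =>
          ((b : ℂ) - z - 2 * a * τ * z) ^ 2 - 4 * a * τ * z ^ 2 * (1 + a * τ)) ζ := by
        apply AnalyticAt.sub
        · exact (((analyticAt_const.sub (analyticAt_id)).sub
            (analyticAt_const.mul analyticAt_id)).pow 2)
        · exact (analyticAt_const.mul (analyticAt_id.pow 2)).mul analyticAt_const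
      have h2 : AnalyticAt ℂ (fun z : ℂ =>
          (((b : ℂ) - z - 2 * a * τ * z) ^ 2 - 4 * a * τ * z ^ 2 * (1 + a * τ))
            ^ ((1 : ℂ) / 2)) ζ := h1.cpow analyticAt_const hslit
      have h3 : AnalyticAt ℂ (fun z : ℂ => 2 * (a : ℂ) * z ^ 2) ζ :=
        analyticAt_const.mul (analyticAt_id.pow 2)
      have h4 : AnalyticAt ℂ (fun z : ℂ =>
          ((b : ℂ) - z - 2 * a * τ * z) +
            (((b : ℂ) - z - 2 * a * τ * z) ^ 2 - 4 * a * τ * z ^ 2 * (1 + a * τ))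
              ^ ((1 : ℂ) / 2)) ζ :=
        ((analyticAt_const.sub analyticAt_id).sub (analyticAt_const.mul analyticAt_id)).add h2
      exact h3.div h4 hDS
    exact ⟨hquad, hden, hA⟩
  refine ⟨?_, ?_, ?_⟩
  · intro ζ hζ
    obtain ⟨hq, hd, _⟩ := key ζ hζ
    rw [eq_div_iff hd]
    linear_combination -hq
  · exact fun ζ hζ => ((key ζ hζ).2.2).analyticWithinAt
  · intro G hGa hG0 _ hGeq
    have ht' : ball (0:ℂ) t ∈ nhds (0:ℂ) := ball_mem_nhds _ ht
    have hE0 : Gexp a b τ 0 = 0 := by simp [Gexp]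
    have hEc : ContinuousAt (Gexp a b τ) 0 :=
      ((key 0 (mem_ball_self ht)).2.2).continuousAt
    have hGc : ContinuousAt G 0 := hGa.continuousAt
    have hb0 : ((b:ℂ)) ≠ 0 := by exact_mod_cast hb.ne'
    have hGden : ∀ᶠ ζ in nhds (0:ℂ), (b:ℂ) - ζ - (τ:ℂ) * G ζ ≠ 0 := by
      have hc : ContinuousAt (fun ζ : ℂ => (b:ℂ) - ζ - (τ:ℂ) * G ζ) 0 :=
        (continuousAt_const.sub continuousAt_id).sub (continuousAt_const.mul hGc)
      apply hc.eventually_ne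
      simp [hG0, hb0]
    have hGq : ∀ᶠ ζ in nhds (0:ℂ),
        (τ:ℂ) * (1 + (a:ℂ) * (τ:ℂ)) * (G ζ) ^ 2
          + (2 * (a:ℂ) * (τ:ℂ) * ζ + ζ - (b:ℂ)) * G ζ + (a:ℂ) * ζ ^ 2 = 0 := by
      filter_upwards [hGeq, hGden] with ζ h1 h2
      rw [eq_div_iff h2] at h1
      linear_combination -h1
    have hEq : ∀ᶠ ζ in nhds (0:ℂ),
        (τ:ℂ) * (1 + (a:ℂ) * (τ:ℂ)) * (Gexp a b τ ζ) ^ 2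
          + (2 * (a:ℂ) * (τ:ℂ) * ζ + ζ - (b:ℂ)) * Gexp a b τ ζ + (a:ℂ) * ζ ^ 2 = 0 := by
      filter_upwards [ht'] with ζ hζ using (key ζ hζ).1
    have hne : ∀ᶠ ζ in nhds (0:ℂ),
        (τ:ℂ) * (1 + (a:ℂ) * (τ:ℂ)) * (G ζ + Gexp a b τ ζ)
          - ((b:ℂ) - ζ - 2 * (a:ℂ) * (τ:ℂ) * ζ) ≠ 0 := by
      have hc : ContinuousAt (fun ζ : ℂ => (τ:ℂ) * (1 + (a:ℂ) * (τ:ℂ)) * (G ζ + Gexp a b τ ζ)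
          - ((b:ℂ) - ζ - 2 * (a:ℂ) * (τ:ℂ) * ζ)) 0 :=
        (continuousAt_const.mul (hGc.add hEc)).sub
          ((continuousAt_const.sub continuousAt_id).sub (continuousAt_const.mul continuousAt_id))
      apply hc.eventually_ne
      simp [hG0, hE0, hb0]
    filter_upwards [hGq, hEq, hne] with ζ h1 h2 h3
    have hfactor : (G ζ - Gexp a b τ ζ) *
        ((τ:ℂ) * (1 + (a:ℂ) * (τ:ℂ)) * (G ζ + Gexp a b τ ζ)
          - ((b:ℂ) - ζ - 2 * (a:ℂ) * (τ:ℂ) * ζ)) = 0 := by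
      linear_combination h1 - h2
    rcases mul_eq_zero.mp hfactor with h | h
    · exact sub_eq_zero.mp h
    · exact absurd h h3
end

section
/- Let $f'(\zeta)=\frac{a\zeta^2}{b-\zeta}$ with $a,b>0$, and consider the inviscid Burgers initial value problem $\partial_\delta G=8nG\,\partial_\zeta G$, $G|_{\delta=0}=f'(\zeta)$. Then for every $\delta\ge0$ the solution by characteristics satisfies $G=f'(\zeta+8n\delta\,G)$ and is analytic in a disk around $\zeta=0$ whose radius is bounded below by $\frac{b}{1+2a\tau+2\sqrt{a\tau(1+a\tau)}}$ with $\tau=8n\delta$; in particular the radius is of order $1/\delta$ as $\delta\to\infty$. -/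
open Metric Complex


set_option maxHeartbeats 1000000

private lemma aux_repos (A T S x B : ℝ) (hA : 0 < A) (hB : 0 < B) (hT : 0 < T)
    (hS0 : 0 ≤ S) (hS2 : S ^ 2 = A * T * (1 + A * T))
    (hx : x * (1 + 2 * A * T + 2 * S) < B) :
    0 < (B + x) ^ 2 - 4 * (1 + A * T) * B * x := by
  have h1 : 0 < B - x * (1 + 2 * A * T + 2 * S) := by linarith
  have hpos : 0 < 1 + 2 * A * T - 2 * S := by
    by_contra h
    push_neg at h
    nlinarith [mul_nonneg (by linarith : (0:ℝ) ≤ 2 * S - (1 + 2 * A * T))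
      (by positivity : (0:ℝ) ≤ 2 * S + (1 + 2 * A * T)), hS2]
  have h2 : 0 < B - x * (1 + 2 * A * T - 2 * S) := by
    rcases le_or_gt x 0 with hx0 | hx0
    · nlinarith
    · nlinarith
  nlinarith [mul_pos h1 h2, sq_nonneg x]

/-- Lemma 4: for the inviscid Burgers problem `∂_δ G = 8n G ∂_ζ G`, `G|₀ = f' = aζ²/(b-ζ)`,
for every `δ ≥ 0` there is a solution-by-characteristics `G` satisfying
`G = f'(ζ + 8nδ G)` which is analytic on a disk of radius at least
`b / (1 + 2aτ + 2√(aτ(1+aτ)))` with `τ = 8nδ` (so the radius is of order `1/δ`). -/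
theorem burgers_characteristics_analytic (n : ℕ) (a b δ : ℝ)
    (ha : 0 < a) (hb : 0 < b) (hδ : 0 ≤ δ) :
    ∃ G : ℂ → ℂ,
      AnalyticOn ℂ G (ball (0 : ℂ)
        (b / (1 + 2 * a * (8 * n * δ) +
          2 * Real.sqrt (a * (8 * n * δ) * (1 + a * (8 * n * δ)))))) ∧
      ∀ ζ ∈ ball (0 : ℂ)
          (b / (1 + 2 * a * (8 * n * δ) +
            2 * Real.sqrt (a * (8 * n * δ) * (1 + a * (8 * n * δ))))),
        G ζ = (a : ℂ) * (ζ + 8 * n * δ * G ζ) ^ 2 /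
          ((b : ℂ) - (ζ + 8 * n * δ * G ζ)) := by
  set τ : ℝ := 8 * n * δ with hτdef
  have hτ : 0 ≤ τ := by positivity
  have hτc : ((τ : ℝ) : ℂ) = 8 * (n : ℂ) * (δ : ℂ) := by rw [hτdef]; push_cast; ring
  rcases eq_or_lt_of_le hτ with hτ0 | hτ0
  · -- τ = 0 : G = a ζ² / (b - ζ), radius = b
    have hs0 : Real.sqrt (a * τ * (1 + a * τ)) = 0 := by
      rw [← hτ0]; simp
    have hR : b / (1 + 2 * a * τ + 2 * Real.sqrt (a * τ * (1 + a * τ))) = b := by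
      rw [hs0, ← hτ0]; simp
    rw [hR]
    have hτc0 : (8 * (n : ℂ) * (δ : ℂ)) = 0 := by rw [← hτc, ← hτ0]; simp
    refine ⟨fun ζ => (a : ℂ) * ζ ^ 2 / ((b : ℂ) - ζ), ?_, ?_⟩
    · intro ζ hζ
      have hne : (b : ℂ) - ζ ≠ 0 := by
        intro h
        have : ζ = (b : ℂ) := by linear_combination -h
        rw [this] at hζ
        simp [abs_of_pos hb] at hζ
      exact ((analyticAt_const.mul (analyticAt_id.pow 2)).div
        (analyticAt_const.sub analyticAt_id) hne).analyticWithinAt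
    · intro ζ hζ
      rw [hτc0]
      ring_nf
  · -- τ > 0
    set s : ℝ := Real.sqrt (a * τ * (1 + a * τ)) with hsdef
    have hs0 : 0 ≤ s := Real.sqrt_nonneg _
    have hs2 : s ^ 2 = a * τ * (1 + a * τ) := Real.sq_sqrt (by positivity)
    set K : ℝ := 1 + 2 * a * τ + 2 * s with hKdef
    have hK : 0 < K := by positivity
    have hK1 : 1 ≤ K := by nlinarith
    set R : ℝ := b / K with hRdef
    set c : ℝ := 1 + a * τ with hcdef
    have hc1 : 1 < c := by nlinarith
    have hcc : ((c : ℝ) : ℂ) = 1 + (a : ℂ) * ((τ : ℝ) : ℂ) := by push_cast [hcdef]; ring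
    have hc0 : ((c : ℝ) : ℂ) ≠ 0 := by
      simp only [ne_eq, Complex.ofReal_eq_zero]; nlinarith
    have h2c : (2 * ((c : ℝ) : ℂ)) ≠ 0 := by
      simp only [ne_eq, mul_eq_zero, not_or]; exact ⟨by norm_num, hc0⟩
    have hb0 : ((b : ℝ) : ℂ) ≠ 0 := by
      simp only [ne_eq, Complex.ofReal_eq_zero]; exact ne_of_gt hb
    have hτ0' : ((τ : ℝ) : ℂ) ≠ 0 := by
      simp only [ne_eq, Complex.ofReal_eq_zero]; exact ne_of_gt hτ0
    set D : ℂ → ℂ := fun z => ((b : ℂ) + z) ^ 2 - 4 * (c : ℂ) * (b : ℂ) * z with hDdef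
    -- membership of D in the slit plane on the ball
    have hslit : ∀ ζ ∈ ball (0 : ℂ) R, D ζ ∈ Complex.slitPlane := by
      intro ζ hζ
      have habs : ‖ζ‖ < R := by
        simpa [Complex.dist_eq] using hζ
      have hxabs : |ζ.re| ≤ ‖ζ‖ := Complex.abs_re_le_norm ζ
      have hxR : ζ.re < R := lt_of_le_of_lt (le_trans (le_abs_self _) hxabs) habs
      have hxK : ζ.re * K < b := by
        rw [hRdef] at hxR
        calc ζ.re * K < (b / K) * K := by exact mul_lt_mul_of_pos_right hxR hK
        _ = b := by field_simp
      rw [Complex.mem_slitPlane_iff]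
      by_cases hy : ζ.im = 0
      · left
        have hre : (D ζ).re = (b + ζ.re) ^ 2 - 4 * c * b * ζ.re := by
          simp [hDdef, pow_two, Complex.add_re, Complex.add_im, Complex.mul_re,
            Complex.mul_im, Complex.sub_re, Complex.ofReal_re, Complex.ofReal_im, hy]
          try ring
        rw [hre, hcdef]
        rw [hKdef] at hxK
        exact aux_repos a τ s ζ.re b ha hb hτ0 hs0 hs2 hxK
      · right
        have him : (D ζ).im = 2 * ζ.im * (b + ζ.re - 2 * c * b) := by
          simp [hDdef, pow_two, Complex.add_re, Complex.add_im, Complex.mul_re,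
            Complex.mul_im, Complex.sub_im, Complex.ofReal_re, Complex.ofReal_im]
          try ring
        rw [him]
        have hxb : ζ.re < b := by
          rcases le_or_gt ζ.re 0 with hx0 | hx0
          · linarith
          · calc ζ.re ≤ ζ.re * K := le_mul_of_one_le_right hx0.le hK1
            _ < b := hxK
        have haτb : 0 ≤ a * τ * b := by positivity
        have : b + ζ.re - 2 * c * b < 0 := by rw [hcdef]; nlinarith
        intro hcon
        rcases mul_eq_zero.mp hcon with h | h
        · rcases mul_eq_zero.mp h with h' | h'
          · norm_num at h'
          · exact hy h'
        · linarith
    refine ⟨fun z => (((b : ℂ) + z -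
        Complex.exp (Complex.log (D z) / 2)) / (2 * (c : ℂ)) - z) / ((τ : ℝ) : ℂ), ?_, ?_⟩
    · intro ζ hζ
      have hDan : AnalyticAt ℂ D ζ := by
        apply AnalyticAt.sub
        · exact (analyticAt_const.add analyticAt_id).pow 2
        · exact analyticAt_const.mul analyticAt_id
      have hSan : AnalyticAt ℂ (fun z => Complex.exp (Complex.log (D z) / 2)) ζ :=
        ((hDan.clog (hslit ζ hζ)).div analyticAt_const (by norm_num)).cexp
      exact ((((analyticAt_const.add analyticAt_id).sub hSan).div analyticAt_const h2c).sub
        analyticAt_id).div analyticAt_const hτ0' |>.analyticWithinAt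
    · intro ζ hζ
      set S : ℂ := Complex.exp (Complex.log (D ζ) / 2) with hSdef
      have hD0 : D ζ ≠ 0 := Complex.slitPlane_ne_zero (hslit ζ hζ)
      have hS2 : S ^ 2 = D ζ := by
        rw [hSdef, sq, ← Complex.exp_add, add_halves, Complex.exp_log hD0]
      set w : ℂ := ((b : ℂ) + ζ - S) / (2 * (c : ℂ)) with hwdef
      have hbw : (b : ℂ) - w ≠ 0 := by
        intro h
        have h' : S = (b : ℂ) + ζ - 2 * (c : ℂ) * b := by
          rw [hwdef] at h
          field_simp at h
          linear_combination h
        have hzero : (4 : ℂ) * c * b ^ 2 * ((c : ℂ) - 1) = 0 := by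
          have hS2' : S ^ 2 = ((b : ℂ) + ζ) ^ 2 - 4 * (c : ℂ) * (b : ℂ) * ζ := hS2
          linear_combination hS2' - (S + ((b : ℂ) + ζ - 2 * (c:ℂ) * b)) * h'
        have hzero' : (4 : ℝ) * c * b ^ 2 * (c - 1) = 0 := by exact_mod_cast hzero
        have hp : 0 < 4 * c * b ^ 2 * (c - 1) :=
          mul_pos (mul_pos (by linarith : (0:ℝ) < 4 * c) (pow_pos hb 2)) (by linarith)
        linarith
      have hGw : ζ + 8 * (n : ℂ) * (δ : ℂ) *
          ((w - ζ) / ((τ : ℝ) : ℂ)) = w := by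
        rw [← hτc]
        field_simp
        ring
      have hwS : 2 * (c : ℂ) * w = (b : ℂ) + ζ - S := by
        rw [hwdef]; field_simp
      have hS2' : S ^ 2 = ((b : ℂ) + ζ) ^ 2 - 4 * (c : ℂ) * (b : ℂ) * ζ := hS2
      have h4c : (4 : ℂ) * (c : ℂ) ≠ 0 := by simp [hc0]
      have hq' : (4 : ℂ) * (c : ℂ) * ((c : ℂ) * w ^ 2 - ((b : ℂ) + ζ) * w + (b : ℂ) * ζ) = 0 := by
        linear_combination (2 * (c : ℂ) * w + (b : ℂ) + ζ - S - 2 * ((b : ℂ) + ζ)) * hwS + hS2'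
      have hq : (c : ℂ) * w ^ 2 - ((b : ℂ) + ζ) * w + (b : ℂ) * ζ = 0 :=
        (mul_eq_zero.mp hq').resolve_left h4c
      have hgoal : (w - ζ) / ((τ : ℝ) : ℂ) = (a : ℂ) * w ^ 2 / ((b : ℂ) - w) := by
        rw [div_eq_div_iff hτ0' hbw]
        linear_combination -hq + w ^ 2 * hcc
      show (w - ζ) / ((τ : ℝ) : ℂ) = _
      rw [hGw, hgoal]
end

section
/- Under the hypotheses of Lemma 6 of the paper (auxiliary IVP estimates): suppose $u_k(T)\le U_k(T)=\frac{c_u}{k^3}\rho^{3-k}(1+\varphi e^{(\lambda+ak)T})$ for $k\ge3$ and $v_k(T)\le V_k(T)=\frac{c_v}{k^4}\rho^{2-k}+\frac{c_u\psi\varphi}{(k+1)^3}\rho^{2-k}e^{a(k+1)T}$ for $k\ge2$, with all constants positive. Then for any $\Lambda>0$, setting $\widehat c_u=c_ue^{3(aT+\Lambda)}(1+\varphi e^{\lambda T})$, $\widehat c_v=c_v+c_ue^{3aT+2\Lambda}\psi\varphi/\Lambda$, and $\widehat\rho=\rho e^{-aT-\Lambda}$, one has $u_k(T)\le\widehat c_u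 k^{-3}\widehat\rho^{3-k}$ for $k\ge3$ and $v_k(T)\le\widehat c_v k^{-4}\widehat\rho^{2-k}$ for $k\ge2$. -/
lemma exp_zpow' (x : ℝ) (n : ℤ) : Real.exp x ^ n = Real.exp ((n : ℝ) * x) := by
  obtain ⟨m, rfl | rfl⟩ := n.eq_nat_or_neg
  · rw [zpow_natCast, ← Real.exp_nat_mul]
    norm_num
  · rw [zpow_neg, zpow_natCast, ← Real.exp_nat_mul, ← Real.exp_neg]
    push_cast
    ring_nf

/-- Corollary 4 (auxiliary IVP estimates): from
`u_k(T) ≤ (c_u/k³) ρ^{3-k} (1 + φ e^{(λ+ak)T})` for `k ≥ 3` and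
`v_k(T) ≤ (c_v/k⁴) ρ^{2-k} + (c_u ψ φ/(k+1)³) ρ^{2-k} e^{a(k+1)T}` for `k ≥ 2`,
for any `Λ > 0` one gets `u_k(T) ≤ ĉ_u k^{-3} ρ̂^{3-k}` and `v_k(T) ≤ ĉ_v k^{-4} ρ̂^{2-k}`,
with `ĉ_u = c_u e^{3(aT+Λ)}(1 + φ e^{λT})`, `ĉ_v = c_v + c_u e^{3aT+2Λ} ψ φ/Λ`,
`ρ̂ = ρ e^{-aT-Λ}`. -/
theorem auxiliary_ivp_estimates (u v : ℕ → ℝ)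
    (cu cv ρ φ ψ lam a T Λ : ℝ)
    (hcu : 0 < cu) (hcv : 0 < cv) (hρ : 0 < ρ) (hφ : 0 < φ) (hψ : 0 < ψ)
    (hlam : 0 < lam) (ha : 0 < a) (hT : 0 < T) (hΛ : 0 < Λ)
    (hu : ∀ k : ℕ, 3 ≤ k →
      u k ≤ cu / (k : ℝ) ^ 3 * ρ ^ ((3 : ℤ) - (k : ℤ)) *
        (1 + φ * Real.exp ((lam + a * k) * T)))
    (hv : ∀ k : ℕ, 2 ≤ k →
      v k ≤ cv / (k : ℝ) ^ 4 * ρ ^ ((2 : ℤ) - (k : ℤ)) +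
        cu * ψ * φ / ((k : ℝ) + 1) ^ 3 * ρ ^ ((2 : ℤ) - (k : ℤ)) *
          Real.exp (a * ((k : ℝ) + 1) * T)) :
    (∀ k : ℕ, 3 ≤ k →
      u k ≤ (cu * Real.exp (3 * (a * T + Λ)) * (1 + φ * Real.exp (lam * T))) / (k : ℝ) ^ 3 *
        (ρ * Real.exp (-(a * T) - Λ)) ^ ((3 : ℤ) - (k : ℤ))) ∧
    (∀ k : ℕ, 2 ≤ k →
      v k ≤ (cv + cu * Real.exp (3 * a * T + 2 * Λ) * ψ * φ / Λ) / (k : ℝ) ^ 4 *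
        (ρ * Real.exp (-(a * T) - Λ)) ^ ((2 : ℤ) - (k : ℤ))) := by
  constructor
  · intro k hk
    have hk3 : (3:ℝ) ≤ (k:ℝ) := by exact_mod_cast hk
    have hkpos : (0:ℝ) < (k:ℝ) := by linarith
    have e1 : Real.exp (3*(a*T+Λ)) * Real.exp ((((3:ℤ)-(k:ℤ)):ℝ) * (-(a*T)-Λ))
        = Real.exp ((k:ℝ)*(a*T+Λ)) := by
      rw [← Real.exp_add]; congr 1; push_cast; ring
    have h2 : (1:ℝ) ≤ Real.exp ((k:ℝ)*(a*T+Λ)) := Real.one_le_exp (by positivity)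
    have h3 : Real.exp ((lam + a*k)*T) ≤ Real.exp (lam*T + (k:ℝ)*(a*T+Λ)) := by
      apply Real.exp_le_exp.mpr; nlinarith
    have key : 1 + φ * Real.exp ((lam + a*(k:ℝ))*T)
        ≤ Real.exp (3*(a*T+Λ)) * (1 + φ * Real.exp (lam*T)) *
          Real.exp ((((3:ℤ)-(k:ℤ)):ℝ) * (-(a*T)-Λ)) := by
      calc 1 + φ * Real.exp ((lam + a*(k:ℝ))*T)
          ≤ Real.exp ((k:ℝ)*(a*T+Λ)) + φ * Real.exp (lam*T + (k:ℝ)*(a*T+Λ)) :=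
            add_le_add h2 (mul_le_mul_of_nonneg_left h3 hφ.le)
        _ = Real.exp (3*(a*T+Λ)) * (1 + φ * Real.exp (lam*T)) *
            Real.exp ((((3:ℤ)-(k:ℤ)):ℝ) * (-(a*T)-Λ)) := by
            rw [Real.exp_add, ← e1]; ring
    have hA : (0:ℝ) ≤ cu / (k:ℝ)^3 * ρ ^ ((3:ℤ)-(k:ℤ)) := by positivity
    calc u k ≤ cu / (k : ℝ) ^ 3 * ρ ^ ((3 : ℤ) - (k : ℤ)) *
        (1 + φ * Real.exp ((lam + a * k) * T)) := hu k hk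
      _ ≤ cu / (k : ℝ) ^ 3 * ρ ^ ((3 : ℤ) - (k : ℤ)) *
          (Real.exp (3*(a*T+Λ)) * (1 + φ * Real.exp (lam*T)) *
            Real.exp ((((3:ℤ)-(k:ℤ)):ℝ) * (-(a*T)-Λ))) :=
        mul_le_mul_of_nonneg_left key hA
      _ = (cu * Real.exp (3 * (a * T + Λ)) * (1 + φ * Real.exp (lam * T))) / (k : ℝ) ^ 3 *
          (ρ * Real.exp (-(a * T) - Λ)) ^ ((3 : ℤ) - (k : ℤ)) := by
        rw [mul_zpow, exp_zpow']; push_cast; ring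
  · intro k hk
    have hk2 : (2:ℝ) ≤ (k:ℝ) := by exact_mod_cast hk
    have hkpos : (0:ℝ) < (k:ℝ) := by linarith
    have hone : (1:ℝ) ≤ Real.exp ((((2:ℤ)-(k:ℤ)):ℝ) * (-(a*T)-Λ)) := by
      apply Real.one_le_exp
      push_cast
      nlinarith [mul_nonneg (by linarith : (0:ℝ) ≤ (k:ℝ)-2) (by positivity : (0:ℝ) ≤ a*T+Λ)]
    have hexp : Real.exp (3*a*T+2*Λ) * Real.exp ((((2:ℤ)-(k:ℤ)):ℝ)*(-(a*T)-Λ))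
        = Real.exp (a*((k:ℝ)+1)*T) * Real.exp ((k:ℝ)*Λ) := by
      rw [← Real.exp_add, ← Real.exp_add]; congr 1; push_cast; ring
    have hpoly : Λ * (k:ℝ)^4 ≤ ((k:ℝ)+1)^3 * Real.exp ((k:ℝ)*Λ) := by
      have hx := Real.add_one_le_exp ((k:ℝ)*Λ)
      have h1 : (k:ℝ)^3 * ((k:ℝ)*Λ + 1) ≤ (k:ℝ)^3 * Real.exp ((k:ℝ)*Λ) :=
        mul_le_mul_of_nonneg_left hx (by positivity)
      have h2 : (k:ℝ)^3 * Real.exp ((k:ℝ)*Λ) ≤ ((k:ℝ)+1)^3 * Real.exp ((k:ℝ)*Λ) :=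
        mul_le_mul_of_nonneg_right (by nlinarith : (k:ℝ)^3 ≤ ((k:ℝ)+1)^3)
          (Real.exp_pos _).le
      nlinarith [h1, h2, pow_nonneg hkpos.le 3]
    have key2 : cu * ψ * φ / ((k:ℝ)+1)^3 * Real.exp (a*((k:ℝ)+1)*T)
        ≤ (cu * Real.exp (3*a*T + 2*Λ) * ψ * φ / Λ) / (k:ℝ)^4 *
          Real.exp ((((2:ℤ)-(k:ℤ)):ℝ) * (-(a*T)-Λ)) := by
      rw [div_mul_eq_mul_div, div_div, div_mul_eq_mul_div,
        div_le_div_iff₀ (by positivity) (by positivity)]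
      have h := mul_le_mul_of_nonneg_left hpoly
        (show (0:ℝ) ≤ cu*ψ*φ*Real.exp (a*((k:ℝ)+1)*T) by positivity)
      have heq : cu * Real.exp (3*a*T+2*Λ) * ψ * φ *
            Real.exp ((((2:ℤ)-(k:ℤ)):ℝ)*(-(a*T)-Λ)) * ((k:ℝ)+1)^3
          = cu*ψ*φ*Real.exp (a*((k:ℝ)+1)*T) * (((k:ℝ)+1)^3 * Real.exp ((k:ℝ)*Λ)) := by
        rw [show cu * Real.exp (3*a*T+2*Λ) * ψ * φ *
              Real.exp ((((2:ℤ)-(k:ℤ)):ℝ)*(-(a*T)-Λ)) * ((k:ℝ)+1)^3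
            = cu*ψ*φ*((k:ℝ)+1)^3*(Real.exp (3*a*T+2*Λ) *
              Real.exp ((((2:ℤ)-(k:ℤ)):ℝ)*(-(a*T)-Λ))) by ring, hexp]
        ring
      linarith [h, heq]
    have hB : (0:ℝ) ≤ cv / (k:ℝ)^4 * ρ ^ ((2:ℤ)-(k:ℤ)) := by positivity
    have hρp : (0:ℝ) ≤ ρ ^ ((2:ℤ)-(k:ℤ)) := by positivity
    calc v k ≤ cv / (k : ℝ) ^ 4 * ρ ^ ((2 : ℤ) - (k : ℤ)) +
        cu * ψ * φ / ((k : ℝ) + 1) ^ 3 * ρ ^ ((2 : ℤ) - (k : ℤ)) *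
          Real.exp (a * ((k : ℝ) + 1) * T) := hv k hk
      _ ≤ cv / (k:ℝ)^4 * ρ ^ ((2:ℤ)-(k:ℤ)) * Real.exp ((((2:ℤ)-(k:ℤ)):ℝ) * (-(a*T)-Λ)) +
          (cu * Real.exp (3*a*T + 2*Λ) * ψ * φ / Λ) / (k:ℝ)^4 *
            Real.exp ((((2:ℤ)-(k:ℤ)):ℝ) * (-(a*T)-Λ)) * ρ ^ ((2:ℤ)-(k:ℤ)) := by
        refine add_le_add ?_ ?_
        · nlinarith [mul_le_mul_of_nonneg_left hone hB]
        · have := mul_le_mul_of_nonneg_right key2 hρp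
          nlinarith [this]
      _ = (cv + cu * Real.exp (3 * a * T + 2 * Λ) * ψ * φ / Λ) / (k : ℝ) ^ 4 *
          (ρ * Real.exp (-(a * T) - Λ)) ^ ((2 : ℤ) - (k : ℤ)) := by
        rw [mul_zpow, exp_zpow']; push_cast; ring
end
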